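/- The only distinguishing critical tree is K₂; that is, no tree T of order n ≥ 3 is d-distinguishing critical for any d. -/

import Mathlib

/-- A labeling with `r` labels is distinguishing if the only automorphism
preserving all labels is the identity. -/
def IsDistinguishing {V : Type*} (G : SimpleGraph V) (r : ℕ) (f : V → Fin r) : Prop :=
  ∀ φ : G ≃g G, (∀ v, f (φ v) = f v) → ∀ v, φ v = v

/-- The distinguishing number of a graph. -/
noncomputable def distNum {V : Type*} (G : SimpleGraph V) : ℕ :=
  sInf {r : ℕ | ∃ f : V → Fin r, IsDistinguishing G r f}

/-- A graph is `d`-distinguishing critical if its distinguishing number is `d`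
and no proper induced subgraph has distinguishing number `d`. -/
def DistCritical {V : Type*} (G : SimpleGraph V) (d : ℕ) : Prop :=
  distNum G = d ∧ ∀ s : Set V, s ≠ Set.univ → distNum (G.induce s) ≠ d

/-- The disjoint union of `c` copies of a graph `H`. -/
def copies {W : Type*} (c : ℕ) (H : SimpleGraph W) : SimpleGraph (Fin c × W) where
  Adj a b := a.1 = b.1 ∧ H.Adj a.2 b.2
  symm := ⟨fun a b h => ⟨h.1.symm, h.2.symm⟩⟩
  loopless := ⟨fun a h => H.irrefl h.2⟩

/-- `numDistLab G k` is the number of inequivalent `k`-distinguishing labelings of `G`,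
two labelings being equivalent when some automorphism of `G` maps one to the other. -/
noncomputable def numDistLab {V : Type*} (G : SimpleGraph V) (k : ℕ) : ℕ :=
  Nat.card (Quot (fun f g : {f : V → Fin k // IsDistinguishing G k f} =>
    ∃ φ : G ≃g G, ∀ v, f.1 (φ v) = g.1 v))

/-!
A tree `T` with `n ≥ 3` vertices has a leaf `r`, with neighbour `s`, and a proper 2-colouring.
Label each colour class injectively with the same `k` labels, `k` the size of the larger class,
so that `r` and `s` share a label. A label-preserving automorphism either preserves the colouring,
and is then the identity, or swaps the colours; then it swaps `r` and `s`, so `s` is a leaf too,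
which is impossible in a connected graph with a third vertex. Hence `D(T) ≤ k`, and any `D(T)`
vertices of the larger colour class induce an edgeless proper subgraph with distinguishing
number `D(T)`.
-/

open Finset

namespace SimpleGraph

variable {V : Type*} {G : SimpleGraph V}

theorem Preconnected.apply_eq_of_forall_adj {α : Sort*} (hG : G.Preconnected) {f : V → α}
    (hf : ∀ u v, G.Adj u v → f u = f v) (u v : V) : f u = f v := by
  obtain ⟨p⟩ := hG u v
  induction p with
  | nil => rfl
  | cons h _ ih => exact (hf _ _ h).trans ih

theorem Preconnected.coloring_fin_two_eq_or_ne (hG : G.Preconnected) (c c' : G.Coloring (Fin 2)) :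
    (∀ v, c' v = c v) ∨ (∀ v, c' v ≠ c v) := by
  have key : ∀ u v, (c' u = c u) = (c' v = c v) :=
    hG.apply_eq_of_forall_adj fun u v h => by
      have := c.valid h
      have := c'.valid h
      simp only [eq_iff_iff]
      omega
  by_cases h : ∃ v, c' v = c v
  · obtain ⟨v₀, hv₀⟩ := h
    exact .inl fun v => key v₀ v ▸ hv₀
  · exact .inr fun v hv => h ⟨v, hv⟩

theorem Preconnected.eq_or_eq_of_adj_of_forall_adj_eq (hG : G.Preconnected) {r s : V}
    (hrs : G.Adj r s) (hr : ∀ w, G.Adj r w → w = s) (hs : ∀ w, G.Adj s w → w = r) (v : V) :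
    v = r ∨ v = s := by
  have closed : ∀ u w, G.Adj u w → (u = r ∨ u = s) → (w = r ∨ w = s) := by
    rintro u w huw (rfl | rfl)
    exacts [.inr (hr w huw), .inl (hs w huw)]
  have := hG.apply_eq_of_forall_adj (f := fun v => v = r ∨ v = s)
    (fun u w huw => propext ⟨closed u w huw, closed w u huw.symm⟩) v r
  simp [this]

theorem IsIndepSet.induce_eq_bot {s : Set V} (hs : G.IsIndepSet s) : G.induce s = ⊥ := by
  ext ⟨u, hu⟩ ⟨v, hv⟩
  simpa using fun h => hs hu hv h.ne h

end SimpleGraph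

open SimpleGraph

theorem distNum_le {V : Type*} {G : SimpleGraph V} {k : ℕ} {f : V → Fin k}
    (hf : IsDistinguishing G k f) : distNum G ≤ k :=
  Nat.sInf_le ⟨f, hf⟩

theorem distNum_bot (W : Type*) [Fintype W] : distNum (⊥ : SimpleGraph W) = Fintype.card W := by
  let e := Fintype.equivFin W
  refine le_antisymm (distNum_le (f := e) fun _ hφ v => e.injective (hφ v)) ?_
  refine le_csInf ⟨_, e, fun _ hφ v => e.injective (hφ v)⟩ ?_
  rintro k ⟨f, hf⟩
  by_contra! hk
  obtain ⟨x, y, hxy, hfxy⟩ := Fintype.exists_ne_map_eq_of_card_lt f (by simpa using hk)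
  classical
  let φ : (⊥ : SimpleGraph W) ≃g ⊥ := ⟨Equiv.swap x y, by simp⟩
  refine hxy (Equiv.swap_apply_left x y ▸ hf φ (fun v => ?_) x).symm
  rcases eq_or_ne v x with rfl | hvx
  · simp [φ, hfxy]
  rcases eq_or_ne v y with rfl | hvy
  · simp [φ, hfxy]
  · simp [φ, Equiv.swap_apply_of_ne_of_ne hvx hvy]

theorem Finset.exists_injOn_fin_apply_eq {V : Type*} {S : Finset V} {k : ℕ} (hS : #S ≤ k)
    (x : V) (i : Fin k) : ∃ a : V → Fin k, Set.InjOn a S ∧ a x = i := by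
  classical
  let a₀ : V → Fin k := fun v =>
    if hv : v ∈ S then Fin.castLE hS (S.equivFin ⟨v, hv⟩) else i
  have ha₀ : Set.InjOn a₀ S := fun u (hu : u ∈ S) v (hv : v ∈ S) huv => by
    simp only [a₀, dif_pos hu, dif_pos hv] at huv
    simpa using S.equivFin.injective (Fin.castLE_injective hS huv)
  exact ⟨Equiv.swap (a₀ x) i ∘ a₀, (Equiv.injective _).comp_injOn ha₀,
    Equiv.swap_apply_left _ _⟩

theorem isDistinguishing_of_coloring_fin_two {V : Type*} {T : SimpleGraph V}
    (hT : T.Preconnected) (c : T.Coloring (Fin 2)) {r s : V} (hrs : T.Adj r s)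
    (hr : ∀ w, T.Adj r w → w = s) (hnt : ∃ v, v ≠ r ∧ v ≠ s) {k : ℕ} {f : V → Fin k}
    (hf : ∀ u v, c u = c v → f u = f v → u = v) (hfrs : f r = f s) :
    IsDistinguishing T k f := by
  intro φ hφ
  rcases hT.coloring_fin_two_eq_or_ne c (c.comp φ.toHom) with hc | hc
  · exact fun v => hf _ _ (hc v) (hφ v)
  · have hcφ : ∀ v, c (φ v) ≠ c v := hc
    have flip : ∀ x y, T.Adj x y → c (φ x) = c y := fun x y hxy => by
      have := hcφ x
      have := c.valid hxy
      omega
    have hφr : φ r = s := hf _ _ (flip r s hrs) ((hφ r).trans hfrs)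
    have hφs : φ s = r := hf _ _ (flip s r hrs.symm) ((hφ s).trans hfrs.symm)
    have hs : ∀ w, T.Adj s w → w = r := fun w hsw => by
      rw [← hφr, ← φ.apply_symm_apply w, φ.map_adj_iff] at hsw
      rw [← φ.apply_symm_apply w, hr _ hsw, hφs]
    obtain ⟨v, hvr, hvs⟩ := hnt
    exact ((hT.eq_or_eq_of_adj_of_forall_adj_eq hrs hr hs v).elim hvr hvs).elim

theorem exists_labeling_injOn_colorClasses {V : Type*} [Fintype V] (c : V → Fin 2) {r s : V}
    (hrs : c r ≠ c s) {k : ℕ} (hk : ∀ i, #{v | c v = i} ≤ k) :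
    ∃ f : V → Fin k, (∀ u v, c u = c v → f u = f v → u = v) ∧ f r = f s := by
  classical
  have hk₀ : 0 < k := (card_pos.mpr ⟨r, by simp⟩).trans_le (hk (c r))
  obtain ⟨a, ha, har⟩ := exists_injOn_fin_apply_eq (hk (c r)) r ⟨0, hk₀⟩
  obtain ⟨b, hb, hbs⟩ := exists_injOn_fin_apply_eq (hk (c s)) s ⟨0, hk₀⟩
  refine ⟨fun v => if c v = c r then a v else b v, fun u v huv hfuv => ?_,
    by simp [hrs.symm, har, hbs]⟩
  by_cases hu : c u = c r
  · have hv : c v = c r := huv ▸ hu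
    simp only [hu, hv, if_true] at hfuv
    exact ha (by simpa using hu) (by simpa using hv) hfuv
  · have hv : c v ≠ c r := huv ▸ hu
    simp only [hu, hv, if_false] at hfuv
    exact hb (by simp; omega) (by simp; omega) hfuv

theorem SimpleGraph.IsTree.exists_isIndepSet_distNum_le {V : Type*} [Fintype V]
    {T : SimpleGraph V} (hT : T.IsTree) (h3 : 3 ≤ Fintype.card V) :
    ∃ B : Finset V, T.IsIndepSet B ∧ (B : Set V) ≠ Set.univ ∧ distNum T ≤ #B := by
  classical
  have : Nontrivial V := Fintype.one_lt_card_iff_nontrivial.mp (by omega)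
  obtain ⟨r, hr⟩ := hT.exists_vert_degree_one_of_nontrivial
  obtain ⟨s, hrs, hr⟩ := degree_eq_one_iff_existsUnique_adj.mp hr
  have hnt : ∃ v, v ≠ r ∧ v ≠ s := by
    obtain ⟨v, -, hv⟩ := exists_mem_notMem_of_card_lt_card
      (card_le_two.trans_lt (by rw [card_univ]; omega) : #{r, s} < #(univ : Finset V))
    exact ⟨v, by simpa using hv⟩
  let c := hT.coloringTwo
  obtain ⟨i, -, hi⟩ := exists_max_image univ (fun i => #{v | c v = i}) univ_nonempty
  obtain ⟨f, hf, hfrs⟩ :=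
    exists_labeling_injOn_colorClasses c (c.valid hrs) (fun j => hi j (mem_univ j))
  refine ⟨({v | c v = i} : Finset V), fun u hu v hv _ huv => c.valid huv ?_,
    fun h => c.valid hrs ?_, distNum_le (isDistinguishing_of_coloring_fin_two
      hT.connected.preconnected c hrs hr hnt hf hfrs)⟩
  · simp only [coe_filter, mem_univ, true_and] at hu hv
    rw [hu, hv]
  · have hcol : ∀ v, c v = i := by simpa [Set.eq_univ_iff_forall] using h
    rw [hcol r, hcol s]

theorem stmt19 {V : Type*} [Fintype V] (T : SimpleGraph V)
    (hT : T.IsTree) (h3 : 3 ≤ Fintype.card V) :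
    ∀ d, ¬ DistCritical T d := by
  rintro d ⟨rfl, hcrit⟩
  obtain ⟨B, hB, hBne, hle⟩ := hT.exists_isIndepSet_distNum_le h3
  obtain ⟨B', hB'B, hcard⟩ := exists_subset_card_eq hle
  refine hcrit B' (fun h => hBne (Set.eq_univ_of_univ_subset (h ▸ coe_subset.mpr hB'B))) ?_
  rw [IsIndepSet.induce_eq_bot (hB.mono (coe_subset.mpr hB'B)), distNum_bot]
  simpa using hcard
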